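/- Conservation law: for any graph Laplacian L, innate opinions s, and equilibrium opinions z* = (L+I)^{-1} s, letting s̄ and z̄* denote the mean-centered versions, the identity P_{z*} + 2·D_{G,z*} + I_{z*,s} = s̄ᵀ s̄ holds, where P_{z*} = ‖z̄*‖², D_{G,z*} = z*ᵀ L z*, and I_{z*,s} = ‖z* - s‖². -/

import Mathlib

/-!
Write w = L z*. The equilibrium equation s = (L + I) z* reads s = z* + w, and w has zero sum
because L is symmetric with zero row sums. Hence s and z* have the same mean, so s̄ = z̄* + w,
z* - s = -w and z̄*ᵀ w = z*ᵀ w; expanding ‖s̄‖² = ‖z̄* + w‖² gives the identity.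
The equilibrium is well defined since 2 xᵀ L x = ∑ᵢⱼ Aᵢⱼ (xᵢ - xⱼ)² ≥ 0 makes L + I positive definite.
-/

open Matrix BigOperators Finset

namespace Matrix

variable {ι : Type*} [Fintype ι] [DecidableEq ι]

def weightedLaplacian (A : Matrix ι ι ℝ) : Matrix ι ι ℝ :=
  diagonal (fun i => ∑ j, A i j) - A

lemma weightedLaplacian_mulVec_apply (A : Matrix ι ι ℝ) (x : ι → ℝ) (i : ι) :
    (weightedLaplacian A *ᵥ x) i = ∑ j, A i j * (x i - x j) := by
  rw [weightedLaplacian, sub_mulVec, Pi.sub_apply, mulVec_diagonal]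
  simp only [mulVec, dotProduct, mul_sub, sum_sub_distrib, sum_mul]

lemma weightedLaplacian_mulVec_one (A : Matrix ι ι ℝ) : weightedLaplacian A *ᵥ 1 = 0 := by
  ext i
  simp [weightedLaplacian_mulVec_apply]

lemma isSymm_weightedLaplacian {A : Matrix ι ι ℝ} (hA : A.IsSymm) :
    (weightedLaplacian A).IsSymm :=
  (isSymm_diagonal _).sub hA

lemma two_mul_dotProduct_weightedLaplacian_mulVec {A : Matrix ι ι ℝ} (hA : A.IsSymm)
    (x : ι → ℝ) :
    2 * (x ⬝ᵥ weightedLaplacian A *ᵥ x) = ∑ i, ∑ j, A i j * (x i - x j) ^ 2 := by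
  have hquad : x ⬝ᵥ weightedLaplacian A *ᵥ x = ∑ i, ∑ j, A i j * (x i * (x i - x j)) := by
    simp only [dotProduct, weightedLaplacian_mulVec_apply, mul_sum]
    exact sum_congr rfl fun i _ => sum_congr rfl fun j _ => by ring
  have hswap : ∑ i, ∑ j, A i j * (x i * (x i - x j)) =
      ∑ i, ∑ j, A i j * (x j * (x j - x i)) := by
    rw [sum_comm]
    simp only [hA.apply]
  rw [two_mul, hquad]
  nth_rewrite 2 [hswap]
  rw [← sum_add_distrib]
  exact sum_congr rfl fun i _ => by
    rw [← sum_add_distrib]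
    exact sum_congr rfl fun j _ => by ring

lemma posDef_weightedLaplacian_add_one {A : Matrix ι ι ℝ} (hA : A.IsSymm)
    (hA₀ : ∀ i j, 0 ≤ A i j) : (weightedLaplacian A + 1).PosDef := by
  refine PosDef.posSemidef_add (.of_dotProduct_mulVec_nonneg ?_ fun x => ?_) PosDef.one
  · exact isSymm_weightedLaplacian hA
  · have hnonneg : 0 ≤ ∑ i, ∑ j, A i j * (x i - x j) ^ 2 :=
      sum_nonneg fun i _ => sum_nonneg fun j _ => mul_nonneg (hA₀ i j) (sq_nonneg _)
    rw [star_trivial]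
    linarith [two_mul_dotProduct_weightedLaplacian_mulVec hA x]

lemma sum_weightedLaplacian_mulVec {A : Matrix ι ι ℝ} (hA : A.IsSymm) (x : ι → ℝ) :
    ∑ i, (weightedLaplacian A *ᵥ x) i = 0 :=
  calc ∑ i, (weightedLaplacian A *ᵥ x) i = 1 ⬝ᵥ weightedLaplacian A *ᵥ x :=
        (one_dotProduct _).symm
    _ = (weightedLaplacian A *ᵥ 1) ⬝ᵥ x := by
      rw [dotProduct_mulVec, ← mulVec_transpose, (isSymm_weightedLaplacian hA).eq]
    _ = 0 := by rw [weightedLaplacian_mulVec_one, zero_dotProduct]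

lemma inv_mulVec_add_mulVec_inv_mulVec {R : Type*} [CommRing R] {L : Matrix ι ι R}
    (hL : IsUnit (L + 1).det) (s : ι → R) :
    (L + 1)⁻¹ *ᵥ s + L *ᵥ ((L + 1)⁻¹ *ᵥ s) = s :=
  calc (L + 1)⁻¹ *ᵥ s + L *ᵥ ((L + 1)⁻¹ *ᵥ s) = (L + 1) *ᵥ ((L + 1)⁻¹ *ᵥ s) := by
        rw [add_mulVec, one_mulVec, add_comm]
    _ = s := by rw [mulVec_mulVec, mul_nonsing_inv _ hL, one_mulVec]

end Matrix

lemma sum_sq_add_sub_const_of_sum_eq_zero {ι : Type*} [Fintype ι] (z w : ι → ℝ) (c : ℝ)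
    (hw : ∑ i, w i = 0) :
    ∑ i, (z i - c) ^ 2 + 2 * (z ⬝ᵥ w) + ∑ i, w i ^ 2 = ∑ i, (z i + w i - c) ^ 2 := by
  have hcw : ∑ i, c * w i = 0 := by rw [← mul_sum, hw, mul_zero]
  have hpoint : ∀ i, (z i - c) ^ 2 + 2 * (z i * w i) + w i ^ 2
      = (z i + w i - c) ^ 2 + 2 * (c * w i) := fun i => by ring
  simp only [dotProduct, mul_sum, ← sum_add_distrib, hpoint]
  rw [sum_add_distrib, ← mul_sum, hcw, mul_zero, add_zero]

theorem stmt_4_general (n : ℕ)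
    (A : Matrix (Fin n) (Fin n) ℝ)
    (hsymm : A.IsSymm)
    (hnonneg : ∀ i j, 0 ≤ A i j)
    (D : Matrix (Fin n) (Fin n) ℝ) (hD : D = Matrix.diagonal (fun i => ∑ j, A i j))
    (L : Matrix (Fin n) (Fin n) ℝ) (hL : L = D - A)
    (s : Fin n → ℝ)
    (sbar : Fin n → ℝ) (hsbar : sbar = fun i => s i - (∑ j, s j) / n)
    (zstar : Fin n → ℝ) (hzstar : zstar = (L + 1)⁻¹.mulVec s)
    (zbar : Fin n → ℝ) (hzbar : zbar = fun i => zstar i - (∑ j, zstar j) / n) :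
    (∑ i, (zbar i) ^ 2) + 2 * (zstar ⬝ᵥ L.mulVec zstar) + (∑ i, (zstar i - s i) ^ 2)
      = sbar ⬝ᵥ sbar := by
  have hLA : L = weightedLaplacian A := by rw [hL, hD]; rfl
  have hs : zstar + L *ᵥ zstar = s := by
    rw [hzstar, hLA]
    exact inv_mulVec_add_mulVec_inv_mulVec
      ((isUnit_iff_isUnit_det _).mp (posDef_weightedLaplacian_add_one hsymm hnonneg).isUnit) s
  have hw : ∑ i, (L *ᵥ zstar) i = 0 := hLA ▸ sum_weightedLaplacian_mulVec hsymm zstar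
  subst hsbar hzbar hs
  have hmean : ∑ j, (zstar j + (L *ᵥ zstar) j) = ∑ j, zstar j := by
    rw [sum_add_distrib, hw, add_zero]
  have hres : ∀ i, (zstar i - (zstar i + (L *ᵥ zstar) i)) ^ 2 = (L *ᵥ zstar) i ^ 2 := fun i => by
    rw [sub_add_cancel_left, neg_sq]
  conv_rhs => rw [dotProduct]
  simp only [Pi.add_apply, hmean, hres, ← sq]
  exact sum_sq_add_sub_const_of_sum_eq_zero zstar (L *ᵥ zstar) _ hw

/-- Conservation law: for Laplacian L, innate opinions s, and equilibrium
z* = (L+I)⁻¹ s, with z̄*, s̄ the mean-centered versions: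
P_{z*} + 2 D_{G,z*} + I_{z*,s} = s̄ᵀ s̄, where P_{z*} = ‖z̄*‖², D_{G,z*} = z*ᵀ L z*,
I_{z*,s} = ‖z* - s‖². -/
theorem stmt_4 (n : ℕ) (hn : 0 < n)
    (A : Matrix (Fin n) (Fin n) ℝ)
    (hsymm : A.IsSymm)
    (hnonneg : ∀ i j, 0 ≤ A i j)
    (hdiag : ∀ i, A i i = 0)
    (D : Matrix (Fin n) (Fin n) ℝ) (hD : D = Matrix.diagonal (fun i => ∑ j, A i j))
    (L : Matrix (Fin n) (Fin n) ℝ) (hL : L = D - A)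
    (s : Fin n → ℝ)
    (sbar : Fin n → ℝ) (hsbar : sbar = fun i => s i - (∑ j, s j) / n)
    (zstar : Fin n → ℝ) (hzstar : zstar = (L + 1)⁻¹.mulVec s)
    (zbar : Fin n → ℝ) (hzbar : zbar = fun i => zstar i - (∑ j, zstar j) / n) :
    (∑ i, (zbar i) ^ 2) + 2 * (zstar ⬝ᵥ L.mulVec zstar) + (∑ i, (zstar i - s i) ^ 2)
      = sbar ⬝ᵥ sbar :=
  stmt_4_general n A hsymm hnonneg D hD L hL s sbar hsbar zstar hzstar zbar hzbar
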